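/- arXiv:1108.4869 — 2 statements merged into one kernel-verified Lean document; each statement's English description precedes it below -/
import Mathlib

section
/- Let p > q > 0 be coprime integers with p/q = [c_1, …, c_n]^+, where the c_i are integers with c_1 ≥ 1, c_i ≥ 1 for 1 < i < n, and c_n ≥ 2 if n ≥ 2. Let D be the finite sequence of integers obtained by concatenating blocks B_1, …, B_n, where for odd i with i < n the block B_i consists of c_i − 1 copies of 2, for even i with i < n the block B_i = (c_i + 2), and the final block B_n = (c_n + 1) if n is even, while B_n consists of c_n − 1 copies of 2 if n is odd. Then D is nonempty and p/(p−q) = [D]^-. -/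
/-!
Write `x = [c₀, …, c_{n-1}]⁺` and `y = [c₁, …, c_{n-1}]⁺`, so `x = c₀ + 1/y` with `x, y > 1`.
Prepending `k` twos to a negative continued fraction of value `1 + 1/u` (`u > 0`) gives
`1 + 1/(u + k)`. By induction on `n`, the blocks read with an even parity offset have value
`1 + 1/(x - 1) = x/(x - 1)` and those with an odd offset have value `x + 1`: in the even case
`c₀ - 1` twos precede the value `y + 1 = 1 + 1/(1/y)`, giving `1 + 1/(1/y + c₀ - 1)`; in the odd
case `c₀ + 2 - 1/(1 + 1/(y - 1)) = c₀ + 1 + 1/y`. Finally `p/(p - q) = 1 + 1/(p/q - 1)`.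
-/

/-- Positive continued fraction `[c₁, …, cₙ]⁺ = c₁ + 1/[c₂, …, cₙ]⁺` of a
finite sequence of rationals (junk value `0` on the empty list). -/
def posCF : List ℚ → ℚ
  | [] => 0
  | [c] => c
  | c :: d :: t => c + 1 / posCF (d :: t)

/-- Negative continued fraction `[c₁, …, cₙ]⁻ = c₁ - 1/[c₂, …, cₙ]⁻` of a
finite sequence of rationals (junk value `0` on the empty list). -/
def negCF : List ℚ → ℚ
  | [] => 0
  | [c] => c
  | c :: d :: t => c - 1 / negCF (d :: t)

lemma posCF_cons (c : ℚ) (t : List ℚ) : posCF (c :: t) = c + 1 / posCF t := by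
  cases t <;> simp [posCF]

lemma negCF_cons (c : ℚ) (t : List ℚ) : negCF (c :: t) = c - 1 / negCF t := by
  cases t <;> simp [negCF]

lemma posCF_map_range_succ (n : ℕ) (f : ℕ → ℚ) :
    posCF ((List.range (n + 1)).map f) =
      f 0 + 1 / posCF ((List.range n).map fun i => f (i + 1)) := by
  rw [List.range_succ_eq_map, List.map_cons, List.map_map, posCF_cons]
  rfl

lemma one_lt_posCF_map_range {n : ℕ} (hn : 1 ≤ n) {f : ℕ → ℚ} (hf : ∀ i < n, 1 ≤ f i)
    (hlast : 1 < f (n - 1)) : 1 < posCF ((List.range n).map f) := by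
  induction n, hn using Nat.le_induction generalizing f with
  | base => simpa [posCF] using hlast
  | succ n hn ih =>
    have hy : 1 < posCF ((List.range n).map fun i => f (i + 1)) :=
      ih (fun i hi => hf (i + 1) (by omega)) (by simpa [Nat.sub_add_cancel hn] using hlast)
    rw [posCF_map_range_succ]
    have := hf 0 (by omega)
    have : 0 < 1 / posCF ((List.range n).map fun i => f (i + 1)) := by positivity
    linarith

lemma negCF_replicate_two_append (k : ℕ) {L : List ℚ} {u : ℚ} (hu : 0 < u)
    (hL : negCF L = 1 + 1 / u) : negCF (List.replicate k 2 ++ L) = 1 + 1 / (u + k) := by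
  -- with `t = 1 + 1/u`, the step `t ↦ 2 - 1/t` is `u ↦ u + 1`
  induction k with
  | zero => simpa using hL
  | succ k ih =>
    rw [List.replicate_succ, List.cons_append, negCF_cons, ih]
    have : 0 < u + k := by positivity
    push_cast
    field_simp
    ring

/-- The `j`-th block of the negative expansion of `[c 0, …, c (n-1)]⁺`, where positions are
counted from an offset `r` that only matters mod 2. -/
def cfBlock (n : ℕ) (c : ℕ → ℤ) (r j : ℕ) : List ℤ :=
  if j = n - 1 then
    (if (n + r) % 2 = 0 then [c j + 1] else List.replicate (c j - 1).toNat 2)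
  else if (j + r) % 2 = 0 then List.replicate (c j - 1).toNat 2
  else [c j + 2]

lemma flatMap_range_succ_cfBlock {n : ℕ} (hn : 1 ≤ n) (c : ℕ → ℤ) (r : ℕ) :
    (List.range (n + 1)).flatMap (cfBlock (n + 1) c r) =
      (if r % 2 = 0 then List.replicate (c 0 - 1).toNat 2 else [c 0 + 2]) ++
        (List.range n).flatMap (cfBlock n (fun i => c (i + 1)) (r + 1)) := by
  rw [List.range_succ_eq_map, List.flatMap_cons, List.flatMap_map]
  congr 1
  · rw [cfBlock, if_neg (by omega), Nat.zero_add]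
  · congr 1
    funext j
    simp only [cfBlock]
    split_ifs <;> first | rfl | omega

lemma negCF_cfBlocks {n : ℕ} (hn : 1 ≤ n) {c : ℕ → ℤ} (hc : ∀ i < n, 1 ≤ c i)
    (hlast : 2 ≤ c (n - 1)) (r : ℕ) :
    negCF (((List.range n).flatMap (cfBlock n c r)).map ((↑) : ℤ → ℚ)) =
      if r % 2 = 0 then 1 + 1 / (posCF ((List.range n).map fun i => (c i : ℚ)) - 1)
      else posCF ((List.range n).map fun i => (c i : ℚ)) + 1 := by
  induction n, hn using Nat.le_induction generalizing c r with
  | base =>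
    rw [Nat.sub_self] at hlast
    rw [List.range_one, List.flatMap_singleton, List.map_singleton, posCF, cfBlock, if_pos rfl]
    by_cases hr : r % 2 = 0
    · obtain ⟨k, hk⟩ : ∃ k : ℕ, (c 0 - 1).toNat = k + 1 := ⟨(c 0 - 2).toNat, by omega⟩
      have hk' : (k : ℚ) = c 0 - 2 := by
        have : (k : ℤ) = c 0 - 2 := by omega
        exact_mod_cast this
      rw [if_neg (by omega), if_pos hr, hk, List.replicate_succ', List.map_append,
        List.map_replicate, List.map_singleton, Int.cast_ofNat,
        negCF_replicate_two_append k one_pos (by norm_num [negCF]), hk']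
      ring
    · rw [if_pos (by omega), if_neg hr, List.map_singleton, negCF]
      push_cast
      ring
  | succ n hn ih =>
    have hcn : (2 : ℚ) ≤ c n := by exact_mod_cast hlast
    have hy := one_lt_posCF_map_range hn (f := fun i => (c (i + 1) : ℚ))
      (fun i hi => by exact_mod_cast hc (i + 1) (by omega))
      (by simp only [Nat.sub_add_cancel hn]; linarith)
    have ih' := ih (c := fun i => c (i + 1)) (fun i hi => hc (i + 1) (by omega))
      (by simpa [Nat.sub_add_cancel hn] using hlast) (r + 1)
    rw [flatMap_range_succ_cfBlock hn, posCF_map_range_succ]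
    set y := posCF ((List.range n).map fun i => (c (i + 1) : ℚ))
    by_cases hr : r % 2 = 0
    · rw [if_neg (by omega)] at ih'
      have hcast : ((c 0 - 1).toNat : ℚ) = c 0 - 1 := by
        have := hc 0 (by omega)
        exact_mod_cast Int.toNat_of_nonneg (by omega)
      rw [if_pos hr, if_pos hr, List.map_append, List.map_replicate, Int.cast_ofNat,
        negCF_replicate_two_append _ (u := 1 / y) (by positivity)
          (by rw [ih', one_div_one_div, add_comm]), hcast]
      ring
    · rw [if_pos (by omega)] at ih'
      have : 0 < y - 1 := by linarith
      rw [if_neg hr, if_neg hr, List.map_append, List.map_singleton, List.singleton_append,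
        negCF_cons, ih']
      push_cast
      field_simp
      ring

/-- The sequence is indexed by `0, …, n-1`: the paper's `cᵢ` is `c (i-1)`. -/
theorem stmt2_general (p q : ℤ) (hq : 0 < q) (hpq : q < p)
    (n : ℕ) (hn : 1 ≤ n) (c : ℕ → ℤ)
    (hc0 : 1 ≤ c 0)
    (hcmid : ∀ i, 0 < i → i < n - 1 → 1 ≤ c i)
    (hclast : 2 ≤ n → 2 ≤ c (n - 1))
    (hcf : (p : ℚ) / q = posCF ((List.range n).map fun i => (c i : ℚ))) :
    ((List.range n).flatMap fun j =>
        if j = n - 1 then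
          (if n % 2 = 0 then [c j + 1] else List.replicate (c j - 1).toNat 2)
        else if j % 2 = 0 then List.replicate (c j - 1).toNat 2
        else [c j + 2]) ≠ [] ∧
    (p : ℚ) / (p - q : ℤ) =
      negCF ((((List.range n).flatMap fun j =>
        if j = n - 1 then
          (if n % 2 = 0 then [c j + 1] else List.replicate (c j - 1).toNat 2)
        else if j % 2 = 0 then List.replicate (c j - 1).toNat 2
        else [c j + 2])).map fun t => (t : ℚ)) := by
  have hq' : (0 : ℚ) < q := by exact_mod_cast hq
  have hx : 1 < (p : ℚ) / q := (one_lt_div hq').2 (by exact_mod_cast hpq)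
  have hlast : 2 ≤ c (n - 1) := by
    obtain h | h := Nat.lt_or_ge n 2
    · obtain rfl : n = 1 := by omega
      have : (1 : ℚ) < c 0 := by simpa [hcf, posCF] using hx
      exact_mod_cast this
    · exact hclast h
  have hc : ∀ i < n, 1 ≤ c i := by
    intro i hi
    obtain rfl | hi0 := Nat.eq_zero_or_pos i
    · exact hc0
    obtain h | rfl : i < n - 1 ∨ i = n - 1 := by omega
    exacts [hcmid i hi0 h, by omega]
  have hD := negCF_cfBlocks hn hc hlast 0
  rw [if_pos rfl, ← hcf] at hD
  -- The coercion in `L.map fun t => (t : ℚ)` elaborates through the list monad.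
  have hmap (L : List ℤ) : (L.map fun t => (t : ℚ)) = L.map ((↑) : ℤ → ℚ) := by
    simp [List.map_eq_flatMap]
  rw [hmap]
  change (List.range n).flatMap (cfBlock n c 0) ≠ [] ∧
    _ = negCF (((List.range n).flatMap (cfBlock n c 0)).map _)
  have hx1 : 0 < (p : ℚ) / q - 1 := by linarith
  refine ⟨fun hnil => ?_, ?_⟩
  · have hpos : 0 < 1 + 1 / ((p : ℚ) / q - 1) := by positivity
    rw [← hD, hnil, List.map_nil] at hpos
    exact lt_irrefl 0 hpos
  · rw [hD]
    have : (p : ℚ) - q ≠ 0 := sub_ne_zero.2 (by exact_mod_cast hpq.ne')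
    push_cast
    field_simp
    ring

/-- If `p > q > 0` are coprime with `p/q = [c₁, …, cₙ]⁺`, then
`p/(p-q) = [2…2 (c₁-1 copies), c₂+2, 2…2 (c₃-1 copies), c₄+2, …]⁻`,
ending with `cₙ+1` if `n` is even and with `cₙ-1` copies of `2` if `n` is odd;
moreover this coefficient sequence is nonempty.
(Here the sequence is indexed by `0, …, n-1`, so the paper's `cᵢ` is `c (i-1)`.) -/
theorem stmt2 (p q : ℤ) (hq : 0 < q) (hpq : q < p) (hcop : IsCoprime p q)
    (n : ℕ) (hn : 1 ≤ n) (c : ℕ → ℤ)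
    (hc0 : 1 ≤ c 0)
    (hcmid : ∀ i, 0 < i → i < n - 1 → 1 ≤ c i)
    (hclast : 2 ≤ n → 2 ≤ c (n - 1))
    (hcf : (p : ℚ) / q = posCF ((List.range n).map fun i => (c i : ℚ))) :
    ((List.range n).flatMap fun j =>
        if j = n - 1 then
          (if n % 2 = 0 then [c j + 1] else List.replicate (c j - 1).toNat 2)
        else if j % 2 = 0 then List.replicate (c j - 1).toNat 2
        else [c j + 2]) ≠ [] ∧
    (p : ℚ) / (p - q : ℤ) =
      negCF ((((List.range n).flatMap fun j =>
        if j = n - 1 then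
          (if n % 2 = 0 then [c j + 1] else List.replicate (c j - 1).toNat 2)
        else if j % 2 = 0 then List.replicate (c j - 1).toNat 2
        else [c j + 2])).map fun t => (t : ℚ)) :=
  stmt2_general p q hq hpq n hn c hc0 hcmid hclast hcf
end

section
/- Let n ≥ 2 and let a_1, …, a_n be integers with a_1 ≥ 1, |a_i| ≥ 2 for 1 < i < n, and either |a_n| ≥ 2 or a_n = −1. Let A_n = A(a_1, …, a_n) and let A_{n−1} = A(a_1, …, a_{n−1}) be its leading principal (n−1)×(n−1) minor. Then signature(A_n) = signature(A_{n−1}) + sign(a_n). -/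
/-!
Gaussian elimination without pivoting writes the quadratic form of `A(a₀, …, a_{m-1})` as
`∑ pₖ (xₖ + x_{k+1} / pₖ)²`, with pivots `p₀ = a₀`, `p_{k+1} = a_{k+1} - 1 / pₖ`, as long as no
pivot vanishes. By Sylvester's law of inertia the signature is then `∑ sign pₖ`, so passing from
`A_{n-1}` to `A_n` adds `sign p_{n-1}`. The hypotheses keep every earlier pivot in
`(-∞, -1) ∪ [1, ∞)`, i.e. `1 / pₖ ∈ (-1, 1]`, and then `p_{n-1} = a_{n-1} - 1 / p_{n-2}` has the
sign of `a_{n-1}`.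
-/

/-- The signature of a Hermitian (real symmetric) matrix: the number of positive
eigenvalues minus the number of negative eigenvalues, counted with multiplicity
(junk value `0` for non-Hermitian matrices). -/
noncomputable def matSig {n : ℕ} (A : Matrix (Fin n) (Fin n) ℝ) : ℤ :=
  if hA : A.IsHermitian then
    ((Finset.univ.filter fun i => 0 < hA.eigenvalues i).card : ℤ) -
    ((Finset.univ.filter fun i => hA.eigenvalues i < 0).card : ℤ)
  else 0

/-- The symmetric tridiagonal `n × n` real matrix with diagonal entries
`a 0, …, a (n-1)` and off-diagonal entries `1`. -/
def triMat (n : ℕ) (a : ℕ → ℤ) : Matrix (Fin n) (Fin n) ℝ :=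
  Matrix.of fun i j : Fin n =>
    if (i : ℕ) = j then (a i : ℝ)
    else if (i : ℕ) + 1 = j ∨ (j : ℕ) + 1 = i then 1 else 0

open Finset Module Matrix

section Inertia

variable {ι κ V : Type*} [Fintype ι] [Fintype κ] [AddCommGroup V] [Module ℝ V]

theorem card_pos_le_of_sum_mul_sq_eq (μ : ι → ℝ) (ν : κ → ℝ) (B : V ≃ₗ[ℝ] (ι → ℝ))
    (C : V →ₗ[ℝ] (κ → ℝ)) (h : ∀ x, ∑ i, μ i * B x i ^ 2 = ∑ j, ν j * C x j ^ 2) :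
    #{i | 0 < μ i} ≤ #{j | 0 < ν j} := by
  by_contra! hlt
  -- a nonzero vector in the kernel of `ψ` makes the left side positive and the right side `≤ 0`
  let ψ : (ι → ℝ) →ₗ[ℝ] ({i // ¬ 0 < μ i} → ℝ) × ({j // 0 < ν j} → ℝ) :=
    (LinearMap.funLeft ℝ ℝ Subtype.val).prod
      (LinearMap.funLeft ℝ ℝ Subtype.val ∘ₗ C ∘ₗ B.symm.toLinearMap)
  have hdim : finrank ℝ (({i // ¬ 0 < μ i} → ℝ) × ({j // 0 < ν j} → ℝ)) <
      finrank ℝ (ι → ℝ) := by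
    have := card_filter_add_card_filter_not (s := univ) (fun i => 0 < μ i)
    simp only [finrank_prod, finrank_fintype_fun_eq_card, Fintype.card_subtype, card_univ] at *
    omega
  obtain ⟨y, hy, hy0⟩ :=
    Submodule.exists_mem_ne_zero_of_ne_bot (LinearMap.ker_ne_bot_of_finrank_lt (f := ψ) hdim)
  rw [LinearMap.mem_ker] at hy
  have hμ : ∀ i, ¬ 0 < μ i → y i = 0 := fun i hi => by
    simpa [ψ] using congrFun (congrArg Prod.fst hy) ⟨i, hi⟩
  have hν : ∀ j, 0 < ν j → C (B.symm y) j = 0 := fun j hj => by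
    simpa [ψ] using congrFun (congrArg Prod.snd hy) ⟨j, hj⟩
  have hpos : 0 < ∑ i, μ i * y i ^ 2 := by
    obtain ⟨i₀, hi₀⟩ := Function.ne_iff.mp hy0
    refine sum_pos' (fun i _ => ?_) ⟨i₀, mem_univ i₀, ?_⟩
    · by_cases hi : 0 < μ i
      · positivity
      · simp [hμ i hi]
    · have : 0 < μ i₀ := by by_contra h'; exact hi₀ (hμ i₀ h')
      exact mul_pos this (sq_pos_of_ne_zero hi₀)
  have hnonpos : ∑ j, ν j * C (B.symm y) j ^ 2 ≤ 0 := by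
    refine sum_nonpos fun j _ => ?_
    by_cases hj : 0 < ν j
    · simp [hν j hj]
    · exact mul_nonpos_of_nonpos_of_nonneg (not_lt.mp hj) (sq_nonneg _)
  have := h (B.symm y)
  rw [LinearEquiv.apply_symm_apply] at this
  linarith

theorem sum_sign_eq_card_pos_sub_card_neg (q : ι → ℝ) :
    ∑ i, (SignType.sign (q i) : ℤ) = #{i | 0 < q i} - #{i | q i < 0} := by
  have hq : ∀ i, (SignType.sign (q i) : ℤ) =
      (if 0 < q i then 1 else 0) - (if q i < 0 then 1 else 0) := fun i => by
    rcases lt_trichotomy (q i) 0 with h | h | h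
    · simp [h, h.not_gt]
    · simp [h]
    · simp [h, h.not_gt]
  simp only [hq, sum_sub_distrib, sum_boole]

/-- Sylvester's law of inertia. -/
theorem sum_sign_eq_of_sum_mul_sq_eq (μ : ι → ℝ) (ν : κ → ℝ) (B : V ≃ₗ[ℝ] (ι → ℝ))
    (C : V ≃ₗ[ℝ] (κ → ℝ)) (h : ∀ x, ∑ i, μ i * B x i ^ 2 = ∑ j, ν j * C x j ^ 2) :
    ∑ i, (SignType.sign (μ i) : ℤ) = ∑ j, (SignType.sign (ν j) : ℤ) := by
  have h' : ∀ x, ∑ i, -μ i * B x i ^ 2 = ∑ j, -ν j * C x j ^ 2 := fun x => by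
    simp only [neg_mul, sum_neg_distrib, h x]
  have hpos := (card_pos_le_of_sum_mul_sq_eq μ ν B C h).antisymm
    (card_pos_le_of_sum_mul_sq_eq ν μ C B fun x => (h x).symm)
  have hneg := (card_pos_le_of_sum_mul_sq_eq _ _ B C h').antisymm
    (card_pos_le_of_sum_mul_sq_eq _ _ C B fun x => (h' x).symm)
  simp only [neg_pos] at hneg
  rw [sum_sign_eq_card_pos_sub_card_neg, sum_sign_eq_card_pos_sub_card_neg, hpos, hneg]

end Inertia

theorem Matrix.IsHermitian.dotProduct_mulVec_eq_sum_eigenvalues {n : Type*} [Fintype n]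
    [DecidableEq n] {A : Matrix n n ℝ} (hA : A.IsHermitian) (x : n → ℝ) :
    x ⬝ᵥ A *ᵥ x = ∑ i, hA.eigenvalues i *
      UnitaryGroup.toLinearEquiv (star hA.eigenvectorUnitary) x i ^ 2 := by
  set U : Matrix n n ℝ := (hA.eigenvectorUnitary : Matrix n n ℝ)
  have hUT : Uᵀ = star U := (conjTranspose_eq_transpose_of_trivial U).symm
  conv_lhs => rw [hA.spectral_theorem, Unitary.conjStarAlgAut_apply]
  rw [← mulVec_mulVec, ← mulVec_mulVec, dotProduct_mulVec, ← mulVec_transpose]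
  simp only [dotProduct, hUT, RCLike.ofReal_real_eq_id, CompTriple.comp_eq, mulVec_diagonal,
    UnitaryGroup.toLinearEquiv, Unitary.coe_star, LinearEquiv.coe_mk, toLin'_apply, sq, U]
  exact sum_congr rfl fun i _ => by ring

theorem matSig_eq_sum_sign_of_dotProduct_mulVec_eq {m : ℕ} {κ : Type*} [Fintype κ]
    {A : Matrix (Fin m) (Fin m) ℝ} (hA : A.IsHermitian) (q : κ → ℝ)
    (L : (Fin m → ℝ) ≃ₗ[ℝ] (κ → ℝ)) (h : ∀ x, x ⬝ᵥ A *ᵥ x = ∑ j, q j * L x j ^ 2) :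
    matSig A = ∑ j, (SignType.sign (q j) : ℤ) := by
  rw [matSig, dif_pos hA, ← sum_sign_eq_card_pos_sub_card_neg]
  exact sum_sign_eq_of_sum_mul_sq_eq _ _ _ L fun x =>
    (hA.dotProduct_mulVec_eq_sum_eigenvalues x).symm.trans (h x)

theorem triMat_isHermitian (m : ℕ) (a : ℕ → ℤ) : (triMat m a).IsHermitian := by
  ext i j
  by_cases h : i = j
  · subst h; rfl
  · simp [triMat, h, Fin.val_eq_val, eq_comm (a := j), or_comm]

theorem dotProduct_triMat_mulVec (m : ℕ) (a : ℕ → ℤ) (x : Fin m → ℝ) (X : ℕ → ℝ)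
    (hx : ∀ i : Fin m, X i = x i) (hXm : X m = 0) :
    x ⬝ᵥ triMat m a *ᵥ x = ∑ k ∈ range m, ((a k : ℝ) * X k ^ 2 + 2 * (X k * X (k + 1))) := by
  have hentry : ∀ i j : ℕ, X i * ((if i = j then (a i : ℝ)
      else if i + 1 = j ∨ j + 1 = i then 1 else 0) * X j) =
      (if i = j then (a i : ℝ) * X i * X j else 0) + (if i + 1 = j then X i * X j else 0) +
        (if j + 1 = i then X j * X i else 0) := fun i j => by
    split_ifs <;> first | omega | ring
  have hnext : ∀ i ∈ range m, (if i + 1 < m then X i * X (i + 1) else 0) =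
      X i * X (i + 1) := fun i hi => by
    split_ifs with h
    · rfl
    · rw [show i + 1 = m by simp at hi; omega, hXm, mul_zero]
  have hsum : x ⬝ᵥ triMat m a *ᵥ x = ∑ i ∈ range m, ∑ j ∈ range m, X i * ((if i = j then
      (a i : ℝ) else if i + 1 = j ∨ j + 1 = i then 1 else 0) * X j) := by
    simp only [← Fin.sum_univ_eq_sum_range, dotProduct, mulVec, mul_sum, triMat, of_apply, hx]
  rw [hsum, sum_congr rfl fun i _ => sum_congr rfl fun j _ => hentry i j]
  simp only [sum_add_distrib]
  rw [sum_comm (f := fun i j => if j + 1 = i then X j * X i else 0)]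
  simp only [sum_ite_eq, mem_range]
  rw [sum_congr rfl hnext, ← sum_add_distrib, ← sum_add_distrib, ← sum_add_distrib]
  refine sum_congr rfl fun k hk => ?_
  rw [if_pos (mem_range.mp hk)]
  ring

/-- The pivots of Gaussian elimination on `triMat`, i.e. the ratios of consecutive leading principal
minors; `(pivot a k)⁻¹ = 0` once a pivot vanishes, so only an initial run of nonzero pivots
is meaningful. -/
noncomputable def pivot (a : ℕ → ℤ) : ℕ → ℝ
  | 0 => a 0
  | k + 1 => a (k + 1) - (pivot a k)⁻¹

theorem sum_pivot_mul_sq (a : ℕ → ℤ) (X : ℕ → ℝ) (m : ℕ) (hp : ∀ k < m, pivot a k ≠ 0) :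
    ∑ k ∈ range m, pivot a k * (X k + X (k + 1) / pivot a k) ^ 2 =
      ∑ k ∈ range m, ((a k : ℝ) * X k ^ 2 + 2 * (X k * X (k + 1))) +
        ((a m : ℝ) - pivot a m) * X m ^ 2 := by
  induction m with
  | zero => simp [pivot]
  | succ m ih =>
    have hm : pivot a m ≠ 0 := hp m (Nat.lt_succ_self m)
    rw [sum_range_succ, sum_range_succ, ih fun k hk => hp k (Nat.lt_succ_of_lt hk), pivot]
    field_simp
    ring

/-- The pivots of Gaussian elimination on `triMat`, i.e. the ratios of consecutive leading principal
minors; `(pivot a k)⁻¹ = 0` once a pivot vanishes, so only an initial run of nonzero pivots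
is meaningful. -/
noncomputable def pivotMap (m : ℕ) (p : ℕ → ℝ) : (Fin m → ℝ) →ₗ[ℝ] (Fin m → ℝ) :=
  LinearMap.pi fun i => LinearMap.proj i +
    (p i)⁻¹ • (LinearMap.proj (i + 1 : ℕ) ∘ₗ Function.ExtendByZero.linearMap ℝ Fin.val)

theorem pivotMap_apply (m : ℕ) (p : ℕ → ℝ) (x : Fin m → ℝ) (i : Fin m) :
    pivotMap m p x i = x i + Function.extend Fin.val x 0 (i + 1) / p i := by
  simp [pivotMap, div_eq_inv_mul]

theorem pivotMap_injective (m : ℕ) (p : ℕ → ℝ) : Function.Injective (pivotMap m p) := by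
  rw [← LinearMap.ker_eq_bot, LinearMap.ker_eq_bot']
  intro x hx
  set X := Function.extend Fin.val x 0
  have hX : ∀ i : Fin m, X i = x i := Fin.val_injective.extend_apply x 0
  have hvanish : ∀ j k, k + j = m → X k = 0 := by
    intro j
    induction j with
    | zero =>
      intro k hk
      exact Function.extend_apply' _ _ _ fun ⟨i, hi⟩ => by omega
    | succ j ih =>
      intro k hk
      have h : x ⟨k, by omega⟩ + X (k + 1) / p k = 0 := by
        rw [← pivotMap_apply]
        exact congrFun hx _
      rw [ih (k + 1) (by omega), zero_div, add_zero] at h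
      rw [← h]
      exact hX ⟨k, by omega⟩
  funext i
  rw [← hX]
  exact hvanish (m - i) i (by omega)

theorem matSig_triMat (m : ℕ) (a : ℕ → ℤ) (hp : ∀ k < m, pivot a k ≠ 0) :
    matSig (triMat m a) = ∑ k ∈ range m, (SignType.sign (pivot a k) : ℤ) := by
  rw [← Fin.sum_univ_eq_sum_range (fun k => (SignType.sign (pivot a k) : ℤ))]
  refine matSig_eq_sum_sign_of_dotProduct_mulVec_eq (triMat_isHermitian m a)
    (fun i : Fin m => pivot a i)
    (LinearEquiv.ofInjectiveEndo _ (pivotMap_injective m (pivot a))) fun x => ?_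
  set X := Function.extend Fin.val x 0
  have hX : ∀ i : Fin m, X i = x i := Fin.val_injective.extend_apply x 0
  have hXm : X m = 0 := Function.extend_apply' _ _ _ fun ⟨i, hi⟩ => by omega
  calc x ⬝ᵥ triMat m a *ᵥ x
      = ∑ k ∈ range m, ((a k : ℝ) * X k ^ 2 + 2 * (X k * X (k + 1))) +
          ((a m : ℝ) - pivot a m) * X m ^ 2 := by
        rw [dotProduct_triMat_mulVec m a x X hX hXm, hXm]; ring
    _ = ∑ k ∈ range m, pivot a k * (X k + X (k + 1) / pivot a k) ^ 2 :=
        (sum_pivot_mul_sq a X m hp).symm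
    _ = _ := by
        rw [← Fin.sum_univ_eq_sum_range]
        simp [pivotMap_apply, hX, X]

theorem inv_mem_Ioc_of_one_le_or_lt_neg_one {p : ℝ} (hp : 1 ≤ p ∨ p < -1) :
    p⁻¹ ∈ Set.Ioc (-1) 1 := by
  rcases hp with hp | hp
  · exact ⟨by linarith [inv_pos.mpr (by linarith : 0 < p)], inv_le_one_of_one_le₀ hp⟩
  · have hinv : p⁻¹ < 0 := inv_lt_zero.mpr (by linarith)
    have := mul_pos_of_neg_of_neg (by linarith : p + 1 < 0) hinv
    rw [add_mul, mul_inv_cancel₀ (by linarith), one_mul] at this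
    exact ⟨by linarith, by linarith⟩

theorem one_le_or_lt_neg_one_sub_inv {p c : ℝ} (hp : 1 ≤ p ∨ p < -1) (hc : 2 ≤ |c|) :
    1 ≤ c - p⁻¹ ∨ c - p⁻¹ < -1 := by
  obtain ⟨hlo, hhi⟩ := inv_mem_Ioc_of_one_le_or_lt_neg_one hp
  rcases le_abs'.mp hc with hc | hc
  · right; linarith
  · left; linarith

theorem sign_sub_inv {p c : ℝ} (hp : 1 ≤ p ∨ p < -1) (hc : 2 ≤ |c| ∨ c = -1) :
    SignType.sign (c - p⁻¹) = SignType.sign c := by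
  obtain ⟨hlo, hhi⟩ := inv_mem_Ioc_of_one_le_or_lt_neg_one hp
  rcases hc with hc | rfl
  · rcases le_abs'.mp hc with hc | hc
    · rw [sign_neg (by linarith), sign_neg (by linarith)]
    · rw [sign_pos (by linarith), sign_pos (by linarith)]
  · rw [sign_neg (by linarith), sign_neg (by norm_num)]

theorem pivot_one_le_or_lt_neg_one (a : ℕ → ℤ) (N : ℕ) (h1 : 1 ≤ a 0)
    (hmid : ∀ i, 0 < i → i < N → 2 ≤ |a i|) : ∀ k < N, 1 ≤ pivot a k ∨ pivot a k < -1 := by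
  intro k hk
  induction k with
  | zero => left; rw [pivot]; exact_mod_cast h1
  | succ k ih =>
    rw [pivot]
    exact one_le_or_lt_neg_one_sub_inv (ih (by omega))
      (by exact_mod_cast hmid (k + 1) k.succ_pos hk)

/-- The sequence is indexed from `0`: the paper's `aᵢ` is `a (i - 1)`. -/
theorem stmt5 (n : ℕ) (hn : 2 ≤ n) (a : ℕ → ℤ)
    (h1 : 1 ≤ a 0)
    (hmid : ∀ i, 0 < i → i < n - 1 → 2 ≤ |a i|)
    (hlast : 2 ≤ |a (n - 1)| ∨ a (n - 1) = -1) :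
    matSig (triMat n a) = matSig (triMat (n - 1) a) + Int.sign (a (n - 1)) := by
  obtain ⟨m, rfl⟩ : ∃ m, n = m + 2 := ⟨n - 2, by omega⟩
  rw [show m + 2 - 1 = m + 1 from rfl] at hmid hlast ⊢
  have hinv := pivot_one_le_or_lt_neg_one a (m + 1) h1 hmid
  have hsign : SignType.sign (pivot a (m + 1)) = SignType.sign (a (m + 1) : ℝ) := by
    rw [pivot]
    exact sign_sub_inv (hinv m m.lt_succ_self) (by exact_mod_cast hlast)
  have hp : ∀ k < m + 2, pivot a k ≠ 0 := by
    intro k hk h0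
    rcases Nat.lt_succ_iff_lt_or_eq.mp hk with hk | rfl
    · rcases hinv k hk with h | h <;> linarith
    · rw [h0, sign_zero, eq_comm, sign_eq_zero_iff, Int.cast_eq_zero] at hsign
      rcases hlast with h | h <;> simp [hsign] at h
  rw [matSig_triMat _ a hp, matSig_triMat _ a fun k hk => hp k (by omega), sum_range_succ,
    hsign, sign_intCast, Int.sign_eq_sign]
end
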